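/- Let G_0 = G, let W_1, …, W_r be such that each W_t is a clique of G_{t−1} and G_t = G_{t−1}|W_t, let F_t = {x ∈ STAB(G) : x_{W_j} = 1 for j = 1,…,t}, fix t ∈ {1,…,r}, and suppose for some k > 0: (I) for every ℓ ≤ t, |W_ℓ| = k and the subgraph of G_{ℓ−1} induced by ∪_{i=1}^ℓ W_i is k-partite with stable vertex classes V_ℓ^1,…,V_ℓ^k; (II) T_t = (V_t, {W_1,…,W_t}) with V_t = ∪_{i=1}^k V_t^i is a strong hypertree. Then for every x ∈ F_t, every i ∈ {1,…,k}, and every pair of vertices u, v ∈ V_t^i, one has x_u = x_v. -/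

import Mathlib

open Finset

variable {V : Type*}

/-- A stable (independent) set of a graph: pairwise non-adjacent vertices. -/
def IsStable (G : SimpleGraph V) (S : Finset V) : Prop :=
  ∀ u ∈ S, ∀ v ∈ S, ¬ G.Adj u v

/-- The characteristic vectors of stable sets of `G`. -/
def stableVecs [DecidableEq V] (G : SimpleGraph V) : Set (V → ℝ) :=
  {x | ∃ S : Finset V, IsStable G S ∧ x = fun v => if v ∈ S then (1 : ℝ) else 0}

/-- The stable set polytope `STAB(G)`. -/
def STAB [DecidableEq V] (G : SimpleGraph V) : Set (V → ℝ) :=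
  convexHull ℝ (stableVecs G)

/-- `x_W = ∑_{v ∈ W} x_v`. -/
def vsum (W : Finset V) (x : V → ℝ) : ℝ := ∑ v ∈ W, x v

/-- The clique projection `G|W`: add every non-edge `uv` with `W ⊆ N(u) ∪ N(v)`. -/
def cliqueProj (G : SimpleGraph V) (W : Finset V) : SimpleGraph V where
  Adj u v := G.Adj u v ∨ (u ≠ v ∧ ¬G.Adj u v ∧ ∀ w ∈ W, G.Adj w u ∨ G.Adj w v)
  symm := by
    constructor
    rintro u v (h | ⟨hne, hna, h⟩)
    · exact Or.inl h.symm
    · exact Or.inr ⟨hne.symm, fun h' => hna h'.symm, fun w hw => (h w hw).symm⟩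
  loopless := by
    constructor
    rintro u (h | ⟨hne, _, _⟩)
    · exact G.loopless.irrefl u h
    · exact hne rfl

/-- Iterated projected graphs: `G_0 = G`, `G_t = G_{t-1} | W_t`. -/
def projSeq (G : SimpleGraph V) (W : ℕ → Finset V) : ℕ → SimpleGraph V
  | 0 => G
  | t + 1 => cliqueProj (projSeq G W t) (W (t + 1))

/-- `F_t = {x ∈ STAB(G) : x_{W_j} = 1, j = 1, …, t}`. -/
def Fface [DecidableEq V] (G : SimpleGraph V) (W : ℕ → Finset V) (t : ℕ) : Set (V → ℝ) :=
  {x ∈ STAB G | ∀ j ∈ Finset.Icc 1 t, vsum (W j) x = 1}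

/-- `α(G[H], c)`: the maximum `c`-weight of a stable set of `G` contained in `H`. -/
noncomputable def alphaW (G : SimpleGraph V) (H : Finset V) (c : V → ℝ) : ℝ :=
  sSup {r : ℝ | ∃ S : Finset V, S ⊆ H ∧ IsStable G S ∧ r = ∑ v ∈ S, c v}

/-- `α(G[H])`: the maximum cardinality of a stable set of `G` contained in `H`. -/
noncomputable def alphaOn (G : SimpleGraph V) (H : Finset V) : ℕ :=
  sSup {k : ℕ | ∃ S : Finset V, S ⊆ H ∧ IsStable G S ∧ S.card = k}

/-- The stability number `α(G)`. -/
noncomputable def alphaNum [Fintype V] (G : SimpleGraph V) : ℕ :=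
  sSup {k : ℕ | ∃ S : Finset V, IsStable G S ∧ S.card = k}

/-- `cᵀx`. -/
def dotp [Fintype V] (c x : V → ℝ) : ℝ := ∑ v, c v * x v

/-- The affine dimension of a set of points. -/
noncomputable def affDim (s : Set (V → ℝ)) : ℕ := Module.finrank ℝ (vectorSpan ℝ s)

/-- Strong hypertree (with hyperedges of size `k`). -/
inductive IsStrongHypertree [DecidableEq V] (k : ℕ) : Finset V → Finset (Finset V) → Prop
  | base (V' : Finset V) : IsStrongHypertree k V' {V'}
  | step (V' : Finset V) (E : Finset (Finset V)) (v : V) (Wi : Finset V) :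
      v ∈ V' → v ∈ Wi → Wi ∈ E →
      (∃ Wj ∈ E, Wj ≠ Wi ∧ (Wi ∩ Wj).card = k - 1) →
      IsStrongHypertree k (V'.erase v) (E.erase Wi) →
      IsStrongHypertree k V' E

/-- Condition (I): `|W_t| = k` and the subgraph of `G_{t-1}` induced by `W_1 ∪ ⋯ ∪ W_t`
is `k`-partite with stable vertex classes `V_t^1, …, V_t^k`. -/
def CondI [DecidableEq V] (G : SimpleGraph V) (W : ℕ → Finset V)
    (Vc : ℕ → ℕ → Finset V) (k t : ℕ) : Prop :=
  (W t).card = k ∧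
  (Finset.Icc 1 k).biUnion (Vc t) = (Finset.Icc 1 t).biUnion W ∧
  (∀ i ∈ Finset.Icc 1 k, ∀ j ∈ Finset.Icc 1 k, i ≠ j → Disjoint (Vc t i) (Vc t j)) ∧
  (∀ i ∈ Finset.Icc 1 k, ∀ u ∈ Vc t i, ∀ v ∈ Vc t i, ¬(projSeq G W (t - 1)).Adj u v)

/-- Condition (II): `T_t = (V_t, {W_1, …, W_t})` is a strong hypertree. -/
def CondII [DecidableEq V] (W : ℕ → Finset V) (Vc : ℕ → ℕ → Finset V) (k t : ℕ) : Prop :=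
  IsStrongHypertree k ((Finset.Icc 1 k).biUnion (Vc t)) ((Finset.Icc 1 t).image W)

/-- Condition (III): every `w ∉ V_t` misses some class `V_t^i` in `G_{t-1}`. -/
def CondIII [DecidableEq V] (G : SimpleGraph V) (W : ℕ → Finset V)
    (Vc : ℕ → ℕ → Finset V) (k t : ℕ) : Prop :=
  ∀ w : V, w ∉ (Finset.Icc 1 k).biUnion (Vc t) →
    ∃ i ∈ Finset.Icc 1 k, ∀ u ∈ Vc t i, ¬(projSeq G W (t - 1)).Adj w u

/-- Condition (IV). -/
def CondIV [Fintype V] [DecidableEq V] (G : SimpleGraph V) (W : ℕ → Finset V)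
    (Vc : ℕ → ℕ → Finset V) (k r : ℕ) : Prop :=
  ∀ i ∈ Finset.Icc 1 (k - 1), ∀ t ∈ Finset.Icc 1 r, ∀ v ∈ W t ∩ Vc t i,
    ∀ w ∈ Finset.univ \ (Finset.Icc 1 k).biUnion (Vc r),
      (∃ z ∈ Vc r i, (projSeq G W r).Adj z w) →
      (G.Adj v w ∨ ∃ t' ∈ Finset.Icc 1 r,
        (projSeq G W (t' - 1)).IsClique (W t : Set V) ∧
        W t ≠ W t' ∧ (W t ∩ W t').card = k - 1 ∧
        v ∉ W t' ∧ ∃ v' ∈ W t' ∩ Vc r i, (projSeq G W (t' - 1)).Adj v' w)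

/-- Condition (V): no vertex of `V_t^k` has a neighbor in `V_r^0` in the graph `G_r`. -/
def CondV [Fintype V] [DecidableEq V] (G : SimpleGraph V) (W : ℕ → Finset V)
    (Vc : ℕ → ℕ → Finset V) (k r t : ℕ) : Prop :=
  ∀ v ∈ Vc t k, ∀ w ∈ Finset.univ \ (Finset.Icc 1 k).biUnion (Vc r),
    ¬(projSeq G W r).Adj v w

/-- `STAB(G[H])`, embedded in `ℝ^V` (coordinates outside `H` are zero). -/
def STABon [DecidableEq V] (G : SimpleGraph V) (H : Finset V) : Set (V → ℝ) :=
  convexHull ℝ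
    {x | ∃ S : Finset V, S ⊆ H ∧ IsStable G S ∧ x = fun v => if v ∈ S then (1 : ℝ) else 0}

/-! Along the elimination order of the strong hypertree, the removed hyperedge `W_i` and its
partner `W_j` differ in exactly one vertex each; as `x` sums to the same value on both, these two
vertices carry the same value of `x`. Every `W_l` is a clique of `G_{t-1}` of size `k` inside the
union of the `k` stable classes `V_t^i`, so it meets each class exactly once. Hence the two
exchanged vertices lie in the same class, and induction along the hypertree propagates equality
of `x` through each class. -/

lemma projSeq_monotone (G : SimpleGraph V) (W : ℕ → Finset V) : Monotone (projSeq G W) :=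
  monotone_nat_of_le_succ fun _ _ _ h => Or.inl h

section

variable [DecidableEq V]

lemma IsStable.card_inter_le_one {G : SimpleGraph V} {C A : Finset V} (hC : IsStable G C)
    (hA : G.IsClique (A : Set V)) : (A ∩ C).card ≤ 1 :=
  Finset.card_le_one.mpr fun a ha b hb => by
    by_contra hab
    exact hC a (Finset.mem_inter.mp ha).2 b (Finset.mem_inter.mp hb).2
      (hA (Finset.mem_inter.mp ha).1 (Finset.mem_inter.mp hb).1 hab)

lemma card_inter_eq_one_of_subset_biUnion {ι : Type*} {s : Finset ι} {C : ι → Finset V}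
    {A : Finset V} (hA : A ⊆ s.biUnion C) (hle : ∀ i ∈ s, (A ∩ C i).card ≤ 1)
    (hcard : A.card = s.card) : ∀ i ∈ s, (A ∩ C i).card = 1 := by
  have hcover : A = s.biUnion fun i => A ∩ C i := by
    ext a
    simp only [Finset.mem_biUnion, Finset.mem_inter]
    exact ⟨fun ha => (Finset.mem_biUnion.mp (hA ha)).imp fun _ hi => ⟨hi.1, ha, hi.2⟩,
      fun ⟨_, _, ha, _⟩ => ha⟩
  have hsum : ∑ i ∈ s, (A ∩ C i).card = ∑ _i ∈ s, 1 := by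
    refine le_antisymm (Finset.sum_le_sum hle) ?_
    calc ∑ _i ∈ s, 1 = A.card := by simp [hcard]
      _ = (s.biUnion fun i => A ∩ C i).card := congrArg _ hcover
      _ ≤ ∑ i ∈ s, (A ∩ C i).card := Finset.card_biUnion_le
  exact (Finset.sum_eq_sum_iff_of_le hle).mp hsum

lemma sdiff_eq_singleton_of_card_inter {A B : Finset V} {k : ℕ} (hA : A.card = k)
    (hAB : (A ∩ B).card = k - 1) {a : V} (ha : a ∈ A \ B) : A \ B = {a} := by
  have hcard : (A \ B).card ≤ 1 := by
    have := Finset.card_inter_add_card_sdiff A B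
    omega
  exact Finset.eq_singleton_iff_unique_mem.mpr
    ⟨ha, fun b hb => Finset.card_le_one.mp hcard b hb a ha⟩

lemma apply_eq_of_sum_eq_of_sdiff_eq_singleton {M : Type*} [AddCancelCommMonoid M] {x : V → M}
    {A B : Finset V} {a b : V} (hA : A \ B = {a}) (hB : B \ A = {b})
    (h : ∑ v ∈ A, x v = ∑ v ∈ B, x v) : x a = x b := by
  simpa [hA, hB] using Finset.sum_sdiff_eq_sum_sdiff_iff.mpr h

lemma exists_mem_inter_apply_eq {M : Type*} [AddCancelCommMonoid M] {x : V → M} {k : ℕ}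
    {A B C : Finset V} (hA : A.card = k) (hB : B.card = k) (hAB : (A ∩ B).card = k - 1)
    (hsum : ∑ v ∈ A, x v = ∑ v ∈ B, x v) (hAC : (A ∩ C).card = 1) (hBC : (B ∩ C).card = 1)
    {u : V} (hu : u ∈ A ∩ C) : ∃ u' ∈ B ∩ C, x u = x u' := by
  obtain ⟨huA, huC⟩ := Finset.mem_inter.mp hu
  by_cases huB : u ∈ B
  · exact ⟨u, Finset.mem_inter.mpr ⟨huB, huC⟩, rfl⟩
  obtain ⟨z, hz⟩ := Finset.card_eq_one.mp hBC
  have hzBC : z ∈ B ∩ C := hz ▸ Finset.mem_singleton_self z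
  obtain ⟨hzB, hzC⟩ := Finset.mem_inter.mp hzBC
  -- `z ∈ A` would give two points of `A ∩ C`
  have hzA : z ∉ A := fun hzA =>
    huB (Finset.card_le_one.mp hAC.le u hu z (Finset.mem_inter.mpr ⟨hzA, hzC⟩) ▸ hzB)
  have hBA : (B ∩ A).card = k - 1 := Finset.inter_comm A B ▸ hAB
  exact ⟨z, hzBC, apply_eq_of_sum_eq_of_sdiff_eq_singleton
    (sdiff_eq_singleton_of_card_inter hA hAB (Finset.mem_sdiff.mpr ⟨huA, huB⟩))
    (sdiff_eq_singleton_of_card_inter hB hBA (Finset.mem_sdiff.mpr ⟨hzB, hzA⟩)) hsum⟩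

lemma IsStrongHypertree.apply_eq_of_mem_inter {M : Type*} [AddCancelCommMonoid M] {x : V → M}
    {k : ℕ} {V' : Finset V} {E : Finset (Finset V)} (hT : IsStrongHypertree k V' E)
    {c : M} {C : Finset V} (hcard : ∀ A ∈ E, A.card = k) (hsum : ∀ A ∈ E, ∑ v ∈ A, x v = c)
    (hC : ∀ A ∈ E, (A ∩ C).card = 1) :
    ∀ A ∈ E, ∀ B ∈ E, ∀ u ∈ A ∩ C, ∀ v ∈ B ∩ C, x u = x v := by
  induction hT with
  | base _ =>
    intro A hA B hB u hu v hv
    rw [Finset.mem_singleton] at hA hB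
    subst hA hB
    exact congrArg x (Finset.card_le_one.mp (hC _ (Finset.mem_singleton_self _)).le u hu v hv)
  | step _ E _ Wi _ _ hWi hpartner _ ih =>
    obtain ⟨Wj, hWj, hji, hinter⟩ := hpartner
    have hWj' : Wj ∈ E.erase Wi := Finset.mem_erase.mpr ⟨hji, hWj⟩
    have transfer : ∀ A ∈ E, ∀ u ∈ A ∩ C, ∃ A' ∈ E.erase Wi, ∃ u' ∈ A' ∩ C, x u = x u' := by
      intro A hA u hu
      by_cases hAi : A = Wi
      · subst hAi
        obtain ⟨u', hu', hx⟩ := exists_mem_inter_apply_eq (hcard A hWi) (hcard Wj hWj) hinter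
          ((hsum A hWi).trans (hsum Wj hWj).symm) (hC A hWi) (hC Wj hWj) hu
        exact ⟨Wj, hWj', u', hu', hx⟩
      · exact ⟨A, Finset.mem_erase.mpr ⟨hAi, hA⟩, u, hu, rfl⟩
    intro A hA B hB u hu v hv
    obtain ⟨A', hA', u', hu', hxu⟩ := transfer A hA u hu
    obtain ⟨B', hB', v', hv', hxv⟩ := transfer B hB v hv
    rw [hxu, hxv]
    exact ih (fun A h => hcard A (Finset.mem_of_mem_erase h))
      (fun A h => hsum A (Finset.mem_of_mem_erase h))
      (fun A h => hC A (Finset.mem_of_mem_erase h)) A' hA' B' hB' u' hu' v' hv'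

end

theorem stmt13_general {V : Type*} [DecidableEq V] (G : SimpleGraph V)
    (r : ℕ) (W : ℕ → Finset V)
    (hclique : ∀ t ∈ Finset.Icc 1 r, (projSeq G W (t - 1)).IsClique (W t : Set V))
    (k : ℕ) (Vc : ℕ → ℕ → Finset V)
    (t : ℕ) (ht : t ∈ Finset.Icc 1 r)
    (hI : ∀ l ∈ Finset.Icc 1 t, CondI G W Vc k l)
    (hII : CondII W Vc k t) :
    ∀ x ∈ Fface G W t, ∀ i ∈ Finset.Icc 1 k,
      ∀ u ∈ Vc t i, ∀ v ∈ Vc t i, x u = x v := by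
  intro x hx i hi u hu v hv
  obtain ⟨ht1, htr⟩ := Finset.mem_Icc.mp ht
  obtain ⟨-, hunion, -, hstable⟩ := hI t (Finset.mem_Icc.mpr ⟨ht1, le_rfl⟩)
  have hclique_t : ∀ l ∈ Finset.Icc 1 t, (projSeq G W (t - 1)).IsClique (W l : Set V) := by
    intro l hl
    obtain ⟨hl1, hlt⟩ := Finset.mem_Icc.mp hl
    exact (hclique l (Finset.mem_Icc.mpr ⟨hl1, hlt.trans htr⟩)).mono
      (projSeq_monotone G W (Nat.sub_le_sub_right hlt 1))
  have hmeet : ∀ A ∈ (Finset.Icc 1 t).image W, (A ∩ Vc t i).card = 1 := by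
    intro A hA
    obtain ⟨l, hl, rfl⟩ := Finset.mem_image.mp hA
    exact card_inter_eq_one_of_subset_biUnion (hunion ▸ Finset.subset_biUnion_of_mem W hl)
      (fun j hj => IsStable.card_inter_le_one (hstable j hj) (hclique_t l hl))
      (by simp [(hI l hl).1]) i hi
  have hedge : ∀ w ∈ Vc t i, ∃ A ∈ (Finset.Icc 1 t).image W, w ∈ A ∩ Vc t i := by
    intro w hw
    obtain ⟨l, hl, hwl⟩ := Finset.mem_biUnion.mp (hunion ▸ Finset.mem_biUnion.mpr ⟨i, hi, hw⟩)
    exact ⟨W l, Finset.mem_image_of_mem W hl, Finset.mem_inter.mpr ⟨hwl, hw⟩⟩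
  obtain ⟨A, hA, huA⟩ := hedge u hu
  obtain ⟨B, hB, hvB⟩ := hedge v hv
  refine hII.apply_eq_of_mem_inter (c := 1) (fun _ hA' => ?_) (fun _ hA' => ?_) hmeet
    A hA B hB u huA v hvB
  · obtain ⟨l, hl, rfl⟩ := Finset.mem_image.mp hA'
    exact (hI l hl).1
  · obtain ⟨l, hl, rfl⟩ := Finset.mem_image.mp hA'
    exact hx.2 l hl

/-- under conditions (I) and (II), any `x ∈ F_t` is constant on each
class `V_t^i`. -/
theorem stmt13 {V : Type*} [Fintype V] [DecidableEq V] (G : SimpleGraph V)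
    (r : ℕ) (W : ℕ → Finset V)
    (hclique : ∀ t ∈ Finset.Icc 1 r, (projSeq G W (t - 1)).IsClique (W t : Set V))
    (k : ℕ) (hk : 0 < k) (Vc : ℕ → ℕ → Finset V)
    (t : ℕ) (ht : t ∈ Finset.Icc 1 r)
    (hI : ∀ l ∈ Finset.Icc 1 t, CondI G W Vc k l)
    (hII : CondII W Vc k t) :
    ∀ x ∈ Fface G W t, ∀ i ∈ Finset.Icc 1 k,
      ∀ u ∈ Vc t i, ∀ v ∈ Vc t i, x u = x v :=
  stmt13_general G r W hclique k Vc t ht hI hII
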